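/- Let x ~ N(μ,1) and define ξ(t,μ) = E[(x − μ)(η_H(x,t) − μ)], the covariance between the data and the hard-threshold estimate. Then ξ(t,μ) = t[φ(t−μ) + φ(t+μ)] + Φ̄(t−μ) + Φ(−t−μ). -/

import Mathlib

/-!
Substituting `u = x - μ`, the integrand becomes `-μ u φ(u)`, which integrates to `0`, plus
`u (u + μ) φ(u)` restricted to the two tails `u ≤ -t - μ` and `u ≥ t - μ`. Since
`φ'(u) = -u φ(u)`, we have `u (u + μ) φ(u) = φ(u) - ((u + μ) φ(u))'`, so each tail
integral is a Gaussian tail probability plus the boundary term `t φ` at its endpoint.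
-/

open MeasureTheory Set

/-- Standard Gaussian density. -/
noncomputable def gphi (v : ℝ) : ℝ := (Real.sqrt (2 * Real.pi))⁻¹ * Real.exp (-v ^ 2 / 2)

/-- Standard Gaussian upper tail probability. -/
noncomputable def PhiBar (v : ℝ) : ℝ := ∫ x in Set.Ioi v, gphi x

/-- Standard Gaussian CDF. -/
noncomputable def Phi (v : ℝ) : ℝ := ∫ x in Set.Iic v, gphi x

noncomputable def etaH (x t : ℝ) : ℝ := if t ≤ |x| then x else 0

open Real

section HalfLine

variable {E : Type*} [NormedAddCommGroup E] [NormedSpace ℝ E] {a : ℝ}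

-- A function integrable together with its derivative vanishes at infinity, so no boundary
-- term appears there.
lemma integral_Ioi_of_hasDerivAt_of_integrableOn [CompleteSpace E] {f f' : ℝ → E}
    (hderiv : ∀ x ∈ Ici a, HasDerivAt f (f' x) x)
    (f'int : IntegrableOn f' (Ioi a)) (fint : IntegrableOn f (Ioi a)) :
    ∫ x in Ioi a, f' x = -f a := by
  have hlim := tendsto_zero_of_hasDerivAt_of_integrableOn_Ioi
    (fun x hx ↦ hderiv x (Ioi_subset_Ici_self hx)) f'int fint
  rw [integral_Ioi_of_hasDerivAt_of_tendsto' hderiv f'int hlim, zero_sub]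

lemma integral_Iic_of_hasDerivAt_of_integrableOn [CompleteSpace E] {f f' : ℝ → E}
    (hderiv : ∀ x ∈ Iic a, HasDerivAt f (f' x) x)
    (f'int : IntegrableOn f' (Iic a)) (fint : IntegrableOn f (Iic a)) :
    ∫ x in Iic a, f' x = f a := by
  have hlim := tendsto_zero_of_hasDerivAt_of_integrableOn_Iic hderiv f'int fint
  rw [integral_Iic_of_hasDerivAt_of_tendsto' hderiv f'int hlim, sub_zero]

lemma setIntegral_Iic_union_Ici {f : ℝ → E} (hf : Integrable f) {b : ℝ} (hab : a < b) :
    ∫ x in Iic a ∪ Ici b, f x = (∫ x in Iic a, f x) + ∫ x in Ioi b, f x := by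
  rw [setIntegral_union (Iic_disjoint_Ici.mpr hab.not_ge) measurableSet_Ici hf.integrableOn
    hf.integrableOn, integral_Ici_eq_integral_Ioi]

end HalfLine

lemma gphi_neg (v : ℝ) : gphi (-v) = gphi v := by
  simp only [gphi, neg_sq]

lemma hasDerivAt_gphi (v : ℝ) : HasDerivAt gphi (-(v * gphi v)) v := by
  have h : HasDerivAt (fun v : ℝ ↦ -v ^ 2 / 2) (-v) v :=
    ((hasDerivAt_pow 2 v).neg.div_const 2).congr_deriv (by ring)
  unfold gphi
  exact (h.exp.const_mul _).congr_deriv (by ring)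

lemma hasDerivAt_mul_gphi (v : ℝ) :
    HasDerivAt (fun v ↦ v * gphi v) (gphi v - v ^ 2 * gphi v) v :=
  ((hasDerivAt_id' v).mul (hasDerivAt_gphi v)).congr_deriv (by ring)

lemma integrable_pow_mul_gphi (n : ℕ) : Integrable fun v ↦ v ^ n * gphi v := by
  have h := (integrable_rpow_mul_exp_neg_mul_sq (b := 1 / 2) (by norm_num)
    (s := n) (by linarith [n.cast_nonneg (α := ℝ)])).const_mul (√(2 * π))⁻¹
  refine h.congr (.of_forall fun v ↦ ?_)
  simp only [gphi, rpow_natCast]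
  ring_nf

lemma integrable_gphi : Integrable gphi := by
  simpa using integrable_pow_mul_gphi 0

lemma integrable_mul_gphi : Integrable fun v ↦ v * gphi v := by
  simpa using integrable_pow_mul_gphi 1

lemma setIntegral_Ioi_mul_gphi (a : ℝ) : ∫ v in Ioi a, v * gphi v = gphi a := by
  have h := integral_Ioi_of_hasDerivAt_of_integrableOn (a := a) (f := -gphi)
    (fun v _ ↦ by simpa only [neg_neg] using (hasDerivAt_gphi v).neg)
    integrable_mul_gphi.integrableOn integrable_gphi.neg.integrableOn
  simpa [integral_neg] using h

lemma setIntegral_Iic_mul_gphi (a : ℝ) : ∫ v in Iic a, v * gphi v = -gphi a := by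
  have h := integral_Iic_of_hasDerivAt_of_integrableOn (a := a) (f := -gphi)
    (fun v _ ↦ by simpa only [neg_neg] using (hasDerivAt_gphi v).neg)
    integrable_mul_gphi.integrableOn integrable_gphi.neg.integrableOn
  simpa [integral_neg] using h

lemma integral_mul_gphi : ∫ v, v * gphi v = 0 := by
  rw [← intervalIntegral.integral_Iic_add_Ioi (b := 0) integrable_mul_gphi.integrableOn
    integrable_mul_gphi.integrableOn, setIntegral_Iic_mul_gphi, setIntegral_Ioi_mul_gphi,
    neg_add_cancel]

lemma setIntegral_Ioi_sq_mul_gphi (a : ℝ) :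
    ∫ v in Ioi a, v ^ 2 * gphi v = a * gphi a + PhiBar a := by
  have h := integral_Ioi_of_hasDerivAt_of_integrableOn (a := a) (fun v _ ↦ hasDerivAt_mul_gphi v)
    (integrable_gphi.sub (integrable_pow_mul_gphi 2)).integrableOn integrable_mul_gphi.integrableOn
  rw [integral_sub integrable_gphi.integrableOn (integrable_pow_mul_gphi 2).integrableOn] at h
  rw [PhiBar]
  linarith

lemma setIntegral_Iic_sq_mul_gphi (a : ℝ) :
    ∫ v in Iic a, v ^ 2 * gphi v = Phi a - a * gphi a := by
  have h := integral_Iic_of_hasDerivAt_of_integrableOn (a := a) (fun v _ ↦ hasDerivAt_mul_gphi v)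
    (integrable_gphi.sub (integrable_pow_mul_gphi 2)).integrableOn integrable_mul_gphi.integrableOn
  rw [integral_sub integrable_gphi.integrableOn (integrable_pow_mul_gphi 2).integrableOn] at h
  rw [Phi]
  linarith

lemma integrable_mul_add_mul_gphi (c : ℝ) : Integrable fun u ↦ u * (u + c) * gphi u :=
  ((integrable_pow_mul_gphi 2).add (integrable_mul_gphi.const_mul c)).congr
    (.of_forall fun u ↦ by simp only [Pi.add_apply]; ring)

lemma setIntegral_Ioi_mul_add_mul_gphi (a c : ℝ) :
    ∫ u in Ioi a, u * (u + c) * gphi u = (a + c) * gphi a + PhiBar a := by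
  have h : ∀ u, u * (u + c) * gphi u = u ^ 2 * gphi u + c * (u * gphi u) := fun u ↦ by ring
  simp_rw [h]
  rw [integral_add (integrable_pow_mul_gphi 2).integrableOn
    (integrable_mul_gphi.const_mul c).integrableOn, integral_const_mul,
    setIntegral_Ioi_sq_mul_gphi, setIntegral_Ioi_mul_gphi]
  ring

lemma setIntegral_Iic_mul_add_mul_gphi (a c : ℝ) :
    ∫ u in Iic a, u * (u + c) * gphi u = Phi a - (a + c) * gphi a := by
  have h : ∀ u, u * (u + c) * gphi u = u ^ 2 * gphi u + c * (u * gphi u) := fun u ↦ by ring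
  simp_rw [h]
  rw [integral_add (integrable_pow_mul_gphi 2).integrableOn
    (integrable_mul_gphi.const_mul c).integrableOn, integral_const_mul,
    setIntegral_Iic_sq_mul_gphi, setIntegral_Iic_mul_gphi]
  ring

lemma mul_etaH_add_sub_mul (g : ℝ → ℝ) (u μ t : ℝ) :
    u * (etaH (u + μ) t - μ) * g u =
      (Iic (-t - μ) ∪ Ici (t - μ)).indicator (fun u ↦ u * (u + μ) * g u) u
        - μ * (u * g u) := by
  have hmem : u ∈ Iic (-t - μ) ∪ Ici (t - μ) ↔ t ≤ |u + μ| := by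
    rw [mem_union, mem_Iic, mem_Ici, le_abs']
    constructor <;> rintro (h | h) <;> [left; right; left; right] <;> linarith
  by_cases h : t ≤ |u + μ|
  · rw [indicator_of_mem (hmem.2 h), etaH, if_pos h]
    ring
  · rw [indicator_of_notMem (mt hmem.1 h), etaH, if_neg h]
    ring

theorem stmt10 (μm t : ℝ) (ht : 0 < t) :
    (∫ x : ℝ, (x - μm) * (etaH x t - μm) * gphi (x - μm)) =
      t * (gphi (t - μm) + gphi (t + μm)) + PhiBar (t - μm) + Phi (-t - μm) := by
  have hshift := integral_sub_right_eq_self (μ := volume)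
    (fun u ↦ u * (etaH (u + μm) t - μm) * gphi u) μm
  simp only [sub_add_cancel] at hshift
  have htails : MeasurableSet (Iic (-t - μm) ∪ Ici (t - μm)) :=
    measurableSet_Iic.union measurableSet_Ici
  have hsymm : gphi (-t - μm) = gphi (t + μm) := by
    rw [← gphi_neg]
    ring_nf
  rw [hshift, integral_congr_ae (.of_forall fun u ↦ mul_etaH_add_sub_mul gphi u μm t),
    integral_sub ((integrable_mul_add_mul_gphi μm).indicator htails)
      (integrable_mul_gphi.const_mul μm),
    integral_indicator htails,
    setIntegral_Iic_union_Ici (integrable_mul_add_mul_gphi μm) (by linarith),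
    setIntegral_Iic_mul_add_mul_gphi, setIntegral_Ioi_mul_add_mul_gphi, integral_const_mul,
    integral_mul_gphi, hsymm]
  ring
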